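/- Let Ψ ∈ ℂ² ⊗ ℂ² ⊗ ℂ² be nonzero. Then Ψ is SLOCC-equivalent to e₁⊗e₁⊗e₁ + e₂⊗e₂⊗e₁ (i.e. the third qubit factorizes and the remaining state of qubits 1 and 2 is entangled) if and only if rank C⁽³⁾(Ψ) = 1 and rank C⁽¹⁾(Ψ) = rank C⁽²⁾(Ψ) = 2. -/

import Mathlib

open scoped TensorProduct

/-- The standard basis vectors of `ℂ²` (`e 0 = e₁`, `e 1 = e₂`). -/
noncomputable def e (i : Fin 2) : Fin 2 → ℂ := Pi.single i 1

/-- The space of three qubits, `ℂ² ⊗ ℂ² ⊗ ℂ²`. -/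
abbrev Qubit3 := (Fin 2 → ℂ) ⊗[ℂ] ((Fin 2 → ℂ) ⊗[ℂ] (Fin 2 → ℂ))

/-- The coefficients `c_{i₁i₂i₃}` of a three-qubit state in the standard product basis. -/
noncomputable def coeff3 (Ψ : Qubit3) (i₁ i₂ i₃ : Fin 2) : ℂ :=
  (((Pi.basisFun ℂ (Fin 2)).tensorProduct
      ((Pi.basisFun ℂ (Fin 2)).tensorProduct (Pi.basisFun ℂ (Fin 2)))).repr Ψ) (i₁, i₂, i₃)

/-- The coefficient matrix `C⁽¹⁾(Ψ)` for the partition 1|23. -/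
noncomputable def Cmat1 (Ψ : Qubit3) : Matrix (Fin 2) (Fin 2 × Fin 2) ℂ :=
  Matrix.of fun i p => coeff3 Ψ i p.1 p.2

/-- The coefficient matrix `C⁽²⁾(Ψ)` for the partition 2|13. -/
noncomputable def Cmat2 (Ψ : Qubit3) : Matrix (Fin 2) (Fin 2 × Fin 2) ℂ :=
  Matrix.of fun i p => coeff3 Ψ p.1 i p.2

/-- The coefficient matrix `C⁽³⁾(Ψ)` for the partition 3|12. -/
noncomputable def Cmat3 (Ψ : Qubit3) : Matrix (Fin 2) (Fin 2 × Fin 2) ℂ :=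
  Matrix.of fun i p => coeff3 Ψ p.1 p.2 i

/-- The action of a triple of linear maps on the three-qubit space. -/
noncomputable def map3 (F1 F2 F3 : (Fin 2 → ℂ) →ₗ[ℂ] (Fin 2 → ℂ)) :
    Qubit3 →ₗ[ℂ] Qubit3 :=
  TensorProduct.map F1 (TensorProduct.map F2 F3)

set_option linter.unnecessarySeqFocus false
set_option linter.unusedVariables false
set_option synthInstance.maxHeartbeats 1000000
set_option maxHeartbeats 2000000

namespace SLOCCaux


noncomputable def B3 : Module.Basis (Fin 2 × Fin 2 × Fin 2) ℂ Qubit3 :=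
  (Pi.basisFun ℂ (Fin 2)).tensorProduct
    ((Pi.basisFun ℂ (Fin 2)).tensorProduct (Pi.basisFun ℂ (Fin 2)))

lemma coeff3_tmul (x y z : Fin 2 → ℂ) (i j k : Fin 2) :
    coeff3 (x ⊗ₜ[ℂ] (y ⊗ₜ[ℂ] z)) i j k = x i * (y j * z k) := by
  simp only [coeff3, Module.Basis.tensorProduct_repr_tmul_apply, Pi.basisFun_repr, smul_eq_mul]
  ring

lemma coeff3_add (Ψ Φ : Qubit3) (i j k : Fin 2) :
    coeff3 (Ψ + Φ) i j k = coeff3 Ψ i j k + coeff3 Φ i j k := by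
  simp [coeff3]

lemma coeff3_zero (i j k : Fin 2) : coeff3 0 i j k = 0 := by simp [coeff3]

lemma ext_coeff3 {Ψ Φ : Qubit3} (h : ∀ i j k, coeff3 Ψ i j k = coeff3 Φ i j k) : Ψ = Φ := by
  apply B3.repr.injective
  ext x
  obtain ⟨i, j, k⟩ := x
  exact h i j k

lemma coeff3_map3 (F1 F2 F3 : (Fin 2 → ℂ) →ₗ[ℂ] (Fin 2 → ℂ)) (Ψ : Qubit3) (i j k : Fin 2) :
    coeff3 (map3 F1 F2 F3 Ψ) i j k =
      ∑ a, ∑ b, ∑ c, (LinearMap.toMatrix' F1) i a * (LinearMap.toMatrix' F2) j b *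
        (LinearMap.toMatrix' F3) k c * coeff3 Ψ a b c := by
  induction Ψ using TensorProduct.induction_on with
  | zero => simp [coeff3_zero]
  | add u v hu hv => simp [map_add, coeff3_add, hu, hv, Finset.sum_add_distrib, mul_add]
  | tmul x yz =>
    induction yz using TensorProduct.induction_on with
    | zero => simp [coeff3_zero, TensorProduct.tmul_zero]
    | add u v hu hv =>
      simp only [TensorProduct.tmul_add, map_add, coeff3_add, hu, hv,
        Finset.sum_add_distrib, mul_add]
    | tmul y z =>
      have hF : ∀ (F : (Fin 2 → ℂ) →ₗ[ℂ] (Fin 2 → ℂ)) (x : Fin 2 → ℂ) (i : Fin 2),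
          F x i = ∑ a, (LinearMap.toMatrix' F) i a * x a := by
        intro F x i
        conv_lhs => rw [← Matrix.toLin'_toMatrix' F]
        rw [Matrix.toLin'_apply]
        rfl
      simp only [map3, TensorProduct.map_tmul, coeff3_tmul, hF]
      simp only [Fin.sum_univ_two]
      ring


open Matrix

noncomputable abbrev kron (M N : Matrix (Fin 2) (Fin 2) ℂ) :
    Matrix (Fin 2 × Fin 2) (Fin 2 × Fin 2) ℂ :=
  Matrix.kroneckerMap (· * ·) M N

lemma Cmat1_map3 (F1 F2 F3 : (Fin 2 → ℂ) →ₗ[ℂ] (Fin 2 → ℂ)) (Ψ : Qubit3) :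
    Cmat1 (map3 F1 F2 F3 Ψ) = (LinearMap.toMatrix' F1) *
      (Cmat1 Ψ * (kron (LinearMap.toMatrix' F2) (LinearMap.toMatrix' F3))ᵀ) := by
  ext i p
  obtain ⟨j, k⟩ := p
  simp only [Cmat1, Matrix.of_apply, coeff3_map3, Matrix.mul_apply, Matrix.transpose_apply,
    Matrix.kroneckerMap_apply, Fintype.sum_prod_type, Fin.sum_univ_two]
  ring

lemma Cmat2_map3 (F1 F2 F3 : (Fin 2 → ℂ) →ₗ[ℂ] (Fin 2 → ℂ)) (Ψ : Qubit3) :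
    Cmat2 (map3 F1 F2 F3 Ψ) = (LinearMap.toMatrix' F2) *
      (Cmat2 Ψ * (kron (LinearMap.toMatrix' F1) (LinearMap.toMatrix' F3))ᵀ) := by
  ext i p
  obtain ⟨j, k⟩ := p
  simp only [Cmat2, Matrix.of_apply, coeff3_map3, Matrix.mul_apply, Matrix.transpose_apply,
    Matrix.kroneckerMap_apply, Fintype.sum_prod_type, Fin.sum_univ_two]
  ring

lemma Cmat3_map3 (F1 F2 F3 : (Fin 2 → ℂ) →ₗ[ℂ] (Fin 2 → ℂ)) (Ψ : Qubit3) :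
    Cmat3 (map3 F1 F2 F3 Ψ) = (LinearMap.toMatrix' F3) *
      (Cmat3 Ψ * (kron (LinearMap.toMatrix' F1) (LinearMap.toMatrix' F2))ᵀ) := by
  ext i p
  obtain ⟨j, k⟩ := p
  simp only [Cmat3, Matrix.of_apply, coeff3_map3, Matrix.mul_apply, Matrix.transpose_apply,
    Matrix.kroneckerMap_apply, Fintype.sum_prod_type, Fin.sum_univ_two]
  ring

lemma isUnit_det_toMatrix' (F : (Fin 2 → ℂ) ≃ₗ[ℂ] (Fin 2 → ℂ)) :
    IsUnit (LinearMap.toMatrix' F.toLinearMap).det := by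
  apply Matrix.isUnit_det_of_right_inverse (B := LinearMap.toMatrix' F.symm.toLinearMap)
  rw [← LinearMap.toMatrix'_comp]
  simp

lemma isUnit_det_kron_transpose {M N : Matrix (Fin 2) (Fin 2) ℂ}
    (hM : IsUnit M.det) (hN : IsUnit N.det) : IsUnit (kron M N)ᵀ.det := by
  apply Matrix.isUnit_det_transpose
  apply Matrix.isUnit_det_of_right_inverse (B := kron M⁻¹ N⁻¹)
  rw [← Matrix.mul_kronecker_mul, Matrix.mul_nonsing_inv _ hM, Matrix.mul_nonsing_inv _ hN,
    Matrix.one_kronecker_one]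

lemma rank_Cmat1_map3 (F1 F2 F3 : (Fin 2 → ℂ) ≃ₗ[ℂ] (Fin 2 → ℂ)) (Ψ : Qubit3) :
    (Cmat1 (map3 F1.toLinearMap F2.toLinearMap F3.toLinearMap Ψ)).rank = (Cmat1 Ψ).rank := by
  rw [Cmat1_map3, Matrix.rank_mul_eq_right_of_isUnit_det _ _ (isUnit_det_toMatrix' F1),
    Matrix.rank_mul_eq_left_of_isUnit_det _ _
      (isUnit_det_kron_transpose (isUnit_det_toMatrix' F2) (isUnit_det_toMatrix' F3))]

lemma rank_Cmat2_map3 (F1 F2 F3 : (Fin 2 → ℂ) ≃ₗ[ℂ] (Fin 2 → ℂ)) (Ψ : Qubit3) :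
    (Cmat2 (map3 F1.toLinearMap F2.toLinearMap F3.toLinearMap Ψ)).rank = (Cmat2 Ψ).rank := by
  rw [Cmat2_map3, Matrix.rank_mul_eq_right_of_isUnit_det _ _ (isUnit_det_toMatrix' F2),
    Matrix.rank_mul_eq_left_of_isUnit_det _ _
      (isUnit_det_kron_transpose (isUnit_det_toMatrix' F1) (isUnit_det_toMatrix' F3))]

lemma rank_Cmat3_map3 (F1 F2 F3 : (Fin 2 → ℂ) ≃ₗ[ℂ] (Fin 2 → ℂ)) (Ψ : Qubit3) :
    (Cmat3 (map3 F1.toLinearMap F2.toLinearMap F3.toLinearMap Ψ)).rank = (Cmat3 Ψ).rank := by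
  rw [Cmat3_map3, Matrix.rank_mul_eq_right_of_isUnit_det _ _ (isUnit_det_toMatrix' F3),
    Matrix.rank_mul_eq_left_of_isUnit_det _ _
      (isUnit_det_kron_transpose (isUnit_det_toMatrix' F1) (isUnit_det_toMatrix' F2))]

noncomputable def Tgt : Qubit3 :=
  e 0 ⊗ₜ[ℂ] (e 0 ⊗ₜ[ℂ] e 0) + e 1 ⊗ₜ[ℂ] (e 1 ⊗ₜ[ℂ] e 0)

lemma coeff3_Tgt (i j k : Fin 2) :
    coeff3 Tgt i j k = (if i = j then 1 else 0) * (if k = 0 then 1 else 0) := by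
  simp only [Tgt, coeff3_add, coeff3_tmul]
  fin_cases i <;> fin_cases j <;> fin_cases k <;>
    simp [e, Pi.single_apply]

lemma rank_le_one_outer {J : Type*} [Fintype J] (u : Fin 2 → ℂ) (w : J → ℂ) :
    (Matrix.of fun i j => u i * w j).rank ≤ 1 := by
  have h : (Matrix.of fun i j => u i * w j) = (Matrix.replicateCol Unit u) * (Matrix.replicateRow Unit w) := by
    ext i j
    simp [Matrix.mul_apply, Matrix.replicateCol, Matrix.replicateRow]
  rw [h]
  exact le_trans (Matrix.rank_mul_le_right _ _) (le_of_le_of_eq (Matrix.rank_le_card_height _) (by simp))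

lemma one_le_rank_of_ne_zero {J : Type*} [Fintype J] [DecidableEq J]
    (A : Matrix (Fin 2) J ℂ) (h : A ≠ 0) : 1 ≤ A.rank := by
  by_contra hc
  apply h
  have h0 : A.rank = 0 := by omega
  rw [Matrix.rank] at h0
  rw [Submodule.finrank_eq_zero, LinearMap.range_eq_bot] at h0
  ext i j
  have := congr_fun (LinearMap.congr_fun h0 (Pi.single j 1)) i
  simpa [Matrix.mulVecLin_apply, Matrix.mulVec, dotProduct, Pi.single_apply] using this

lemma rank_Cmat3_Tgt : (Cmat3 Tgt).rank = 1 := by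
  have hC : Cmat3 Tgt = Matrix.of fun i p =>
      (if i = (0 : Fin 2) then (1:ℂ) else 0) * (if p.1 = p.2 then 1 else 0) := by
    ext i p
    simp only [Cmat3, Matrix.of_apply, coeff3_Tgt]
    split_ifs <;> simp
  refine le_antisymm (hC ▸ rank_le_one_outer _ _) ?_
  apply one_le_rank_of_ne_zero
  intro h
  have h00 := congr_fun (congr_fun h 0) (0, 0)
  simp [Cmat3, coeff3_Tgt] at h00

noncomputable def pickB : Matrix (Fin 2 × Fin 2) (Fin 2) ℂ :=
  Matrix.of fun p i => if p.1 = i ∧ p.2 = 0 then 1 else 0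

lemma rank_Cmat1_Tgt : (Cmat1 Tgt).rank = 2 := by
  have hB : Cmat1 Tgt * pickB = 1 := by
    ext i i'
    simp only [Matrix.mul_apply, Cmat1, pickB, Matrix.of_apply, coeff3_Tgt,
      Fintype.sum_prod_type, Fin.sum_univ_two]
    fin_cases i <;> fin_cases i' <;> simp [Matrix.one_apply]
  refine le_antisymm (by simpa using Matrix.rank_le_card_height (Cmat1 Tgt)) ?_
  have := Matrix.rank_mul_le_left (Cmat1 Tgt) pickB
  rw [hB, Matrix.rank_one] at this
  simpa using this

lemma rank_Cmat2_Tgt : (Cmat2 Tgt).rank = 2 := by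
  have hB : Cmat2 Tgt * pickB = 1 := by
    ext i i'
    simp only [Matrix.mul_apply, Cmat2, pickB, Matrix.of_apply, coeff3_Tgt,
      Fintype.sum_prod_type, Fin.sum_univ_two]
    fin_cases i <;> fin_cases i' <;> simp [Matrix.one_apply]
  refine le_antisymm (by simpa using Matrix.rank_le_card_height (Cmat2 Tgt)) ?_
  have := Matrix.rank_mul_le_left (Cmat2 Tgt) pickB
  rw [hB, Matrix.rank_one] at this
  simpa using this

lemma rank_one_decomp {J : Type*} [Fintype J] [DecidableEq J]
    (A : Matrix (Fin 2) J ℂ) (h : A.rank = 1) :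
    ∃ (u : Fin 2 → ℂ) (w : J → ℂ), u ≠ 0 ∧ ∀ i j, A i j = u i * w j := by
  rw [Matrix.rank] at h
  obtain ⟨v, hv0, hvs⟩ := finrank_eq_one_iff'.mp h
  have hmem : ∀ j : J, (fun i => A i j) ∈ LinearMap.range A.mulVecLin := by
    intro j
    refine ⟨Pi.single j 1, ?_⟩
    ext i
    simp [Matrix.mulVecLin_apply, Matrix.mulVec, dotProduct, Pi.single_apply]
  choose c hc using fun j => hvs ⟨_, hmem j⟩
  refine ⟨(v : Fin 2 → ℂ), c, ?_, ?_⟩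
  · simpa [Submodule.coe_eq_zero] using hv0
  · intro i j
    have := congr_fun (congrArg Subtype.val (hc j)) i
    simpa [mul_comm] using this.symm

lemma isUnit_det_of_rank_two (W : Matrix (Fin 2) (Fin 2) ℂ) (h : W.rank = 2) :
    IsUnit W.det := by
  have hsurj : Function.Surjective W.mulVecLin := by
    rw [← LinearMap.range_eq_top]
    apply Submodule.eq_top_of_finrank_eq
    rw [← Matrix.rank, h]
    simp [Module.finrank_pi]
  have hbij : Function.Bijective W.mulVecLin :=
    ⟨(LinearMap.injective_iff_surjective.mpr hsurj), hsurj⟩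
  let E := LinearEquiv.ofBijective W.mulVecLin hbij
  have hW : LinearMap.toMatrix' E.toLinearMap = W := by
    have : E.toLinearMap = W.mulVecLin := rfl
    rw [this, ← Matrix.toLin'_apply', LinearMap.toMatrix'_toLin']
  rw [← hW]
  exact isUnit_det_toMatrix' E

noncomputable def matEquiv (M N : Matrix (Fin 2) (Fin 2) ℂ) (h1 : M * N = 1) (h2 : N * M = 1) :
    (Fin 2 → ℂ) ≃ₗ[ℂ] (Fin 2 → ℂ) :=
  LinearEquiv.ofLinear (Matrix.toLin' M) (Matrix.toLin' N)
    (by rw [← Matrix.toLin'_mul, h1, Matrix.toLin'_one])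
    (by rw [← Matrix.toLin'_mul, h2, Matrix.toLin'_one])

lemma matEquiv_toMatrix' (M N : Matrix (Fin 2) (Fin 2) ℂ) (h1 : M * N = 1) (h2 : N * M = 1) :
    LinearMap.toMatrix' (matEquiv M N h1 h2).toLinearMap = M := by
  simp [matEquiv, LinearMap.toMatrix'_toLin']

/-- there is an invertible matrix sending a nonzero vector to `e 0`. -/
lemma exists_G (u : Fin 2 → ℂ) (hu : u ≠ 0) :
    ∃ (G G' : Matrix (Fin 2) (Fin 2) ℂ), G * G' = 1 ∧ G' * G = 1 ∧ G *ᵥ u = e 0 := by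
  by_cases h0 : u 0 ≠ 0
  · refine ⟨!![(u 0)⁻¹, 0; -(u 1) / u 0, 1], !![u 0, 0; u 1, 1], ?_, ?_, ?_⟩
    · ext i j
      fin_cases i <;> fin_cases j <;>
        simp [Matrix.mul_apply, Fin.sum_univ_two, Matrix.one_apply] <;> field_simp <;> ring
    · ext i j
      fin_cases i <;> fin_cases j <;>
        simp [Matrix.mul_apply, Fin.sum_univ_two, Matrix.one_apply] <;> field_simp <;> ring
    · ext i
      fin_cases i <;>
        simp [Matrix.mulVec, dotProduct, Fin.sum_univ_two, e, Pi.single_apply] <;>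
        field_simp <;> ring
  · have h1 : u 1 ≠ 0 := by
      intro h1
      apply hu
      ext i
      fin_cases i <;> simp_all
    push_neg at h0
    refine ⟨!![0, (u 1)⁻¹; 1, -(u 0) / u 1], !![u 0, 1; u 1, 0], ?_, ?_, ?_⟩
    · ext i j
      fin_cases i <;> fin_cases j <;>
        simp [Matrix.mul_apply, Fin.sum_univ_two, Matrix.one_apply] <;> field_simp <;> ring
    · ext i j
      fin_cases i <;> fin_cases j <;>
        simp [Matrix.mul_apply, Fin.sum_univ_two, Matrix.one_apply] <;> field_simp <;> ring
    · ext i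
      fin_cases i <;>
        simp [Matrix.mulVec, dotProduct, Fin.sum_univ_two, e, Pi.single_apply, h0] <;>
        field_simp

lemma backward (Ψ : Qubit3) (h3 : (Cmat3 Ψ).rank = 1) (h1 : (Cmat1 Ψ).rank = 2) :
    ∃ F1 F2 F3 : (Fin 2 → ℂ) ≃ₗ[ℂ] (Fin 2 → ℂ),
      map3 F1.toLinearMap F2.toLinearMap F3.toLinearMap Ψ = Tgt := by
  obtain ⟨u, w, hu, hA⟩ := rank_one_decomp _ h3
  set W : Matrix (Fin 2) (Fin 2) ℂ := Matrix.of fun a b => w (a, b) with hWdef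
  have hcoeff : ∀ a b k, coeff3 Ψ a b k = W a b * u k := by
    intro a b k
    have := hA k (a, b)
    simp only [Cmat3, Matrix.of_apply] at this
    rw [this, hWdef, Matrix.of_apply, mul_comm]
  have hC1 : Cmat1 Ψ =
      W * (Matrix.of fun b (p : Fin 2 × Fin 2) => if p.1 = b then u p.2 else 0) := by
    ext i p
    obtain ⟨j, k⟩ := p
    simp only [Cmat1, Matrix.of_apply, hcoeff, Matrix.mul_apply, Fin.sum_univ_two]
    fin_cases j <;> simp
  have hrW : W.rank = 2 := by
    refine le_antisymm (by simpa using Matrix.rank_le_card_height W) ?_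
    have h := Matrix.rank_mul_le_left W
      (Matrix.of fun b (p : Fin 2 × Fin 2) => if p.1 = b then u p.2 else 0)
    rw [← hC1, h1] at h
    exact h
  have hdet := isUnit_det_of_rank_two W hrW
  obtain ⟨G, G', hGG', hG'G, hGu⟩ := exists_G u hu
  refine ⟨matEquiv W⁻¹ W (Matrix.nonsing_inv_mul _ hdet) (Matrix.mul_nonsing_inv _ hdet),
    LinearEquiv.refl ℂ _, matEquiv G G' hGG' hG'G, ?_⟩
  apply ext_coeff3
  intro i j k
  rw [coeff3_map3, coeff3_Tgt, matEquiv_toMatrix', matEquiv_toMatrix']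
  have hrefl : LinearMap.toMatrix' (LinearEquiv.refl ℂ (Fin 2 → ℂ)).toLinearMap = 1 :=
    LinearMap.toMatrix'_id
  rw [hrefl]
  have hWW := Matrix.nonsing_inv_mul W hdet
  have hGuk := congr_fun hGu k
  simp only [Matrix.mulVec, dotProduct, Fin.sum_univ_two, e, Pi.single_apply] at hGuk
  fin_cases j
  · have hWWij := congr_fun (congr_fun hWW i) 0
    simp only [Matrix.mul_apply, Fin.sum_univ_two, Matrix.one_apply] at hWWij
    simp only [hcoeff, Matrix.mul_apply, Fin.sum_univ_two, Matrix.one_apply]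
    norm_num
    linear_combination (norm := (split_ifs <;> ring1)) (G k 0 * u 0 + G k 1 * u 1) * hWWij +
      (if i = (0 : Fin 2) then (1:ℂ) else 0) * hGuk
  · have hWWij := congr_fun (congr_fun hWW i) 1
    simp only [Matrix.mul_apply, Fin.sum_univ_two, Matrix.one_apply] at hWWij
    simp only [hcoeff, Matrix.mul_apply, Fin.sum_univ_two, Matrix.one_apply]
    norm_num
    linear_combination (norm := (split_ifs <;> ring1)) (G k 0 * u 0 + G k 1 * u 1) * hWWij +
      (if i = (1 : Fin 2) then (1:ℂ) else 0) * hGuk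

end SLOCCaux

open SLOCCaux in
theorem class_0_3_Psi12_iff (Ψ : Qubit3) (hΨ : Ψ ≠ 0) :
    (∃ F1 F2 F3 : (Fin 2 → ℂ) ≃ₗ[ℂ] (Fin 2 → ℂ),
        map3 F1.toLinearMap F2.toLinearMap F3.toLinearMap Ψ
          = e 0 ⊗ₜ[ℂ] (e 0 ⊗ₜ[ℂ] e 0) + e 1 ⊗ₜ[ℂ] (e 1 ⊗ₜ[ℂ] e 0)) ↔
      (Cmat3 Ψ).rank = 1 ∧ (Cmat1 Ψ).rank = 2 ∧ (Cmat2 Ψ).rank = 2 := by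
  constructor
  · rintro ⟨F1, F2, F3, h⟩
    rw [show (e 0 ⊗ₜ[ℂ] (e 0 ⊗ₜ[ℂ] e 0) + e 1 ⊗ₜ[ℂ] (e 1 ⊗ₜ[ℂ] e 0)) = Tgt from rfl] at h
    have e1 := rank_Cmat1_map3 F1 F2 F3 Ψ
    have e2 := rank_Cmat2_map3 F1 F2 F3 Ψ
    have e3 := rank_Cmat3_map3 F1 F2 F3 Ψ
    rw [h] at e1 e2 e3
    exact ⟨by rw [← e3, rank_Cmat3_Tgt], by rw [← e1, rank_Cmat1_Tgt],
      by rw [← e2, rank_Cmat2_Tgt]⟩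
  · rintro ⟨h3, h1, -⟩
    exact backward Ψ h3 h1
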